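/- arXiv:2512.08412 — 7 statements merged into one kernel-verified Lean document; each statement's English description precedes it below -/
import Mathlib

section
/- Let (M,d) be a compact metric space and let A and B be two disjoint compact subsets of M. Then either there exists a connected component of M meeting both A and B, or M = M_A ⊎ M_B, where M_A and M_B are disjoint compact subsets of M containing A and B, respectively. -/
/-- In a compact Hausdorff space, if the connected component of `a` is disjoint from a
compact set `B`, there is a clopen set containing `a` disjoint from `B`. -/
lemma exists_clopen_disjoint_of_connectedComponent_disjoint
    {X : Type*} [TopologicalSpace X] [T2Space X] [CompactSpace X]
    {a : X} {B : Set X} (hB : IsCompact B) (h : connectedComponent a ∩ B = ∅) :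
    ∃ U : Set X, IsClopen U ∧ a ∈ U ∧ U ∩ B = ∅ := by
  rw [connectedComponent_eq_iInter_isClopen a] at h
  rw [Set.inter_comm] at h
  obtain ⟨t, ht⟩ := hB.elim_finite_subfamily_closed
    (fun s : { s : Set X // IsClopen s ∧ a ∈ s } => (s : Set X))
    (fun s => s.2.1.1) h
  refine ⟨⋂ i ∈ t, (i : Set X), isClopen_biInter_finset fun i _ => i.2.1,
    Set.mem_iInter₂.2 fun i _ => i.2.2, ?_⟩
  rw [Set.inter_comm] at ht
  exact ht

/-- Whyburn's separation lemma: in a compact metric space `M`, given two disjoint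
compact subsets `A` and `B`, either some connected component of `M` meets both `A`
and `B`, or `M` splits as a disjoint union `M = M_A ⊎ M_B` of compact sets with
`A ⊆ M_A` and `B ⊆ M_B`. -/
theorem whyburn_separation {M : Type*} [MetricSpace M] [CompactSpace M]
    (A B : Set M) (hA : IsCompact A) (hB : IsCompact B) (hAB : Disjoint A B) :
    (∃ x : M, (connectedComponent x ∩ A).Nonempty ∧ (connectedComponent x ∩ B).Nonempty) ∨
      (∃ MA MB : Set M, IsCompact MA ∧ IsCompact MB ∧ Disjoint MA MB ∧
        A ⊆ MA ∧ B ⊆ MB ∧ MA ∪ MB = Set.univ) := by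
  by_cases hmeet : ∃ x : M, (connectedComponent x ∩ A).Nonempty ∧
      (connectedComponent x ∩ B).Nonempty
  · exact Or.inl hmeet
  right
  push_neg at hmeet
  -- For each a ∈ A, get a clopen set U a containing a disjoint from B.
  have key : ∀ a ∈ A, ∃ U : Set M, IsClopen U ∧ a ∈ U ∧ U ∩ B = ∅ := by
    intro a ha
    apply exists_clopen_disjoint_of_connectedComponent_disjoint hB
    have := hmeet a ⟨a, mem_connectedComponent, ha⟩
    exact this
  choose! U hUclopen hUmem hUdisj using key
  -- A is covered by the U a's; extract a finite subcover.
  obtain ⟨t, hts, ht⟩ := hA.elim_finite_subcover_image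
    (fun a (ha : a ∈ A) => (hUclopen a ha).2)
    (fun x hx => Set.mem_biUnion hx (hUmem x hx))
  set MA : Set M := ⋃ a ∈ t, U a with hMA
  have hMAclopen : IsClopen MA := by
    apply Set.Finite.isClopen_biUnion ht.1
    exact fun a ha => hUclopen a (hts ha)
  have hAMA : A ⊆ MA := by
    intro x hx
    obtain ⟨a, ha, hxa⟩ := Set.mem_iUnion₂.1 (ht.2 hx)
    exact Set.mem_biUnion ha hxa
  have hMAB : MA ∩ B = ∅ := by
    rw [hMA, Set.iUnion₂_inter]
    simp only [Set.iUnion_eq_empty]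
    exact fun a ha => hUdisj a (hts ha)
  refine ⟨MA, MAᶜ, hMAclopen.isClosed.isCompact, hMAclopen.compl.isClosed.isCompact,
    disjoint_compl_right, hAMA, ?_, Set.union_compl_self MA⟩
  intro b hb
  intro hbMA
  exact Set.eq_empty_iff_forall_notMem.1 hMAB b ⟨hbMA, hb⟩
end

section
/- Let (X,d) be a metric space, let S ⊆ X be a compact subset, and let D ⊆ S be a nonempty compact subset which is a union of connected components of S, i.e., for every x ∈ D the connected component of x in S is contained in D. Then for every δ > 0 there exists an open set V ⊆ X such that D ⊆ V, every point of V lies at distance strictly less than δ from D, and S ∩ ∂V = ∅, where ∂V denotes the topological frontier of V. -/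
/-!
In the compact Hausdorff space `S`, connected components are intersections of clopen sets, so by
compactness each component inside `D` has a clopen neighbourhood inside the `δ/2`-thickening
of `D`; finitely many of them cover `D`. Their union `U` is clopen in `S`, so `U` and `S \ U` are
disjoint compact sets, and a thin enough thickening `V` of `U` has its frontier in the gap
between them.
-/

open Set Metric Topology

section CompactT2

variable {Y : Type*} [TopologicalSpace Y] [CompactSpace Y] [T2Space Y]

lemma exists_isClopen_of_connectedComponent_subset {x : Y} {W : Set Y} (hW : IsOpen W)
    (h : connectedComponent x ⊆ W) : ∃ Z : Set Y, IsClopen Z ∧ x ∈ Z ∧ Z ⊆ W := by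
  let N := { Z : Set Y // IsClopen Z ∧ x ∈ Z }
  have : Nonempty N := ⟨⟨univ, isClopen_univ, mem_univ x⟩⟩
  have hdir : Directed (· ⊇ ·) fun Z : N => Z.val := by
    rintro ⟨Z, hZ, hxZ⟩ ⟨Z', hZ', hxZ'⟩
    exact ⟨⟨Z ∩ Z', hZ.inter hZ', hxZ, hxZ'⟩, inter_subset_left, inter_subset_right⟩
  have hW_nhds : ∀ y ∈ ⋂ Z : N, Z.val, W ∈ 𝓝 y := fun y hy =>
    hW.mem_nhds (h ((connectedComponent_eq_iInter_isClopen x).symm ▸ hy))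
  obtain ⟨⟨Z, hZ, hxZ⟩, hZW⟩ :=
    exists_subset_nhds_of_compactSpace hdir (fun Z => Z.property.1.1) hW_nhds
  exact ⟨Z, hZ, hxZ, hZW⟩

lemma IsClosed.exists_isClopen_of_connectedComponent_subset {K W : Set Y} (hK : IsClosed K)
    (hW : IsOpen W) (h : ∀ x ∈ K, connectedComponent x ⊆ W) :
    ∃ Z : Set Y, IsClopen Z ∧ K ⊆ Z ∧ Z ⊆ W := by
  choose! Z hZ hxZ hZW using fun x hx =>
    _root_.exists_isClopen_of_connectedComponent_subset hW (h x hx)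
  obtain ⟨t, htK, ht, hKt⟩ := hK.isCompact.elim_finite_subcover_image
    (fun x hx => (hZ x hx).isOpen) (fun x hx => mem_biUnion hx (hxZ x hx))
  exact ⟨⋃ x ∈ t, Z x, ht.isClopen_biUnion fun x hx => hZ x (htK hx), hKt,
    iUnion₂_subset fun x hx => hZW x (htK hx)⟩

end CompactT2

/-- The compactness of both `U` and `S \ U` encodes that `U` is clopen in `S`. -/
lemma IsCompact.exists_clopenIn_of_connectedComponentIn_subset {X : Type*} [TopologicalSpace X]
    [T2Space X] {S D W : Set X} (hS : IsCompact S) (hD : IsClosed D) (hDS : D ⊆ S)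
    (hW : IsOpen W) (h : ∀ x ∈ D, connectedComponentIn S x ⊆ W) :
    ∃ U : Set X, D ⊆ U ∧ U ⊆ S ∧ U ⊆ W ∧ IsCompact U ∧ IsCompact (S \ U) := by
  have : CompactSpace S := isCompact_iff_compactSpace.1 hS
  have hcomp : ∀ x ∈ (Subtype.val ⁻¹' D : Set S),
      connectedComponent x ⊆ Subtype.val ⁻¹' W := fun x hx y hy =>
    h x hx ((connectedComponentIn_eq_image x.2).symm ▸ mem_image_of_mem _ hy)
  obtain ⟨Z, hZ, hDZ, hZW⟩ :=
    (hD.preimage continuous_subtype_val).exists_isClopen_of_connectedComponent_subset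
      (hW.preimage continuous_subtype_val) hcomp
  refine ⟨Subtype.val '' Z, fun x hx => ⟨⟨x, hDS hx⟩, hDZ hx, rfl⟩,
    Subtype.coe_image_subset S Z, image_subset_iff.2 hZW,
    hZ.isClosed.isCompact.image continuous_subtype_val, ?_⟩
  rw [← image_val_compl]
  exact hZ.compl.isClosed.isCompact.image continuous_subtype_val

lemma disjoint_union_frontier_thickening {X : Type*} [PseudoMetricSpace X] {K C : Set X} {r : ℝ}
    (hr : 0 < r) (h : Disjoint (cthickening r K) C) :
    Disjoint (K ∪ C) (frontier (thickening r K)) := by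
  refine disjoint_union_left.2 ⟨?_, ?_⟩
  · exact (disjoint_frontier_iff_isOpen.2 isOpen_thickening).symm.mono_left
      (self_subset_thickening hr K)
  · exact (h.mono_left <| (frontier_subset_closure).trans
      (closure_thickening_subset_cthickening r K)).symm

theorem exists_open_isolating_neighborhood_general {X : Type*} [MetricSpace X]
    (S D : Set X) (hS : IsCompact S) (hD : IsCompact D)
    (hDS : D ⊆ S)
    (hcomp : ∀ x ∈ D, connectedComponentIn S x ⊆ D)
    {δ : ℝ} (hδ : 0 < δ) :
    ∃ V : Set X, IsOpen V ∧ D ⊆ V ∧ (∀ x ∈ V, Metric.infDist x D < δ) ∧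
      S ∩ frontier V = ∅ := by
  have hδ2 : 0 < δ / 2 := half_pos hδ
  obtain ⟨U, hDU, hUS, hUW, hU, hSU⟩ := hS.exists_clopenIn_of_connectedComponentIn_subset
    hD.isClosed hDS isOpen_thickening fun x hx => (hcomp x hx).trans (self_subset_thickening hδ2 D)
  obtain ⟨r₀, hr₀, hr₀U⟩ := hU.exists_cthickening_subset_open hSU.isClosed.isOpen_compl
    (subset_compl_iff_disjoint_right.2 disjoint_sdiff_right)
  set r := min r₀ (δ / 2)
  have hr : 0 < r := lt_min hr₀ hδ2
  refine ⟨thickening r U, isOpen_thickening, hDU.trans (self_subset_thickening hr U), ?_, ?_⟩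
  · intro x hx
    have hx' : x ∈ thickening (r + δ / 2) D :=
      thickening_thickening_subset r (δ / 2) D (thickening_subset_of_subset r hUW hx)
    obtain ⟨z, hz, -⟩ := mem_thickening_iff.1 hx'
    calc infDist x D < r + δ / 2 := (mem_thickening_iff_infDist_lt ⟨z, hz⟩).1 hx'
      _ ≤ δ := by linarith [min_le_right r₀ (δ / 2)]
  · have hdisj := disjoint_union_frontier_thickening hr
      (subset_compl_iff_disjoint_right.1 ((cthickening_mono (min_le_left r₀ _) U).trans hr₀U))
    rwa [union_sdiff_cancel hUS, disjoint_iff_inter_eq_empty] at hdisj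

/-- Existence of open isolating neighborhoods: if `S` is a compact subset of a metric
space `X` and `D ⊆ S` is a nonempty compact set which is a union of connected
components of `S`, then for every `δ > 0` there is an open set `V` with `D ⊆ V`,
every point of `V` at distance `< δ` from `D`, and `S ∩ ∂V = ∅`. -/
theorem exists_open_isolating_neighborhood {X : Type*} [MetricSpace X]
    (S D : Set X) (hS : IsCompact S) (hD : IsCompact D) (hDne : D.Nonempty)
    (hDS : D ⊆ S)
    (hcomp : ∀ x ∈ D, connectedComponentIn S x ⊆ D)
    {δ : ℝ} (hδ : 0 < δ) :
    ∃ V : Set X, IsOpen V ∧ D ⊆ V ∧ (∀ x ∈ V, Metric.infDist x D < δ) ∧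
      S ∩ frontier V = ∅ :=
  exists_open_isolating_neighborhood_general S D hS hD hDS hcomp hδ
end

section
/- The set 𝒞₂ := (⋃_{n∈ℕ} {t • u_n : t ∈ ℝ, 0 < t ≤ t_n}) ∪ {0} is a closed subset of U. -/
/-- Separation of points on distinct rays: if `t ≤ s` then
`t/6 ≤ ‖t • u n - s • u m‖`. -/
lemma ray_sep {U : Type*} [NormedAddCommGroup U] [NormedSpace ℝ U]
    (u : ℕ → U) (hnorm : ∀ n, ‖u n‖ = 1)
    (hsep : ∀ n m, n ≠ m → (1 : ℝ) / 2 ≤ ‖u n - u m‖)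
    {n m : ℕ} (hnm : n ≠ m) {t s : ℝ} (ht : 0 < t) (hts : t ≤ s) :
    t / 6 ≤ ‖t • u n - s • u m‖ := by
  have h1 : (1 : ℝ) / 2 ≤ ‖u n - u m‖ := hsep n m hnm
  have hs : 0 < s := lt_of_lt_of_le ht hts
  have hnt : ‖t • u n‖ = t := by
    rw [norm_smul, hnorm, Real.norm_of_nonneg ht.le, mul_one]
  have hns : ‖s • u m‖ = s := by
    rw [norm_smul, hnorm, Real.norm_of_nonneg hs.le, mul_one]
  rcases le_or_gt (t / 6) (s - t) with h | h
  · have := norm_sub_norm_le (s • u m) (t • u n)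
    rw [hns, hnt, norm_sub_rev] at this
    linarith
  · have h2 : ‖t • u n - t • u m‖ = t * ‖u n - u m‖ := by
      rw [← smul_sub, norm_smul, Real.norm_of_nonneg ht.le]
    have h3 : ‖s • u m - t • u m‖ = s - t := by
      rw [← sub_smul, norm_smul, Real.norm_of_nonneg (by linarith : (0:ℝ) ≤ s - t),
        hnorm, mul_one]
    have h4 : ‖t • u n - t • u m‖ ≤ ‖t • u n - s • u m‖ + (s - t) := by
      have := norm_sub_le_norm_sub_add_norm_sub (t • u n) (s • u m) (t • u m)
      linarith
    have h5 : t / 2 ≤ t * ‖u n - u m‖ := by nlinarith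
    linarith

/-- The set `𝒞₂ = (⋃ n, {t • uₙ : 0 < t ≤ tₙ}) ∪ {0}`, built from a sequence of
unit vectors `uₙ` with mutual distances `≥ 1/2` and `tₙ = 1 - 1/(n+1)`, is closed. -/
theorem C2_isClosed {U : Type*} [NormedAddCommGroup U] [NormedSpace ℝ U]
    [CompleteSpace U] (hU : ¬ FiniteDimensional ℝ U)
    (u : ℕ → U) (hnorm : ∀ n, ‖u n‖ = 1)
    (hsep : ∀ n m, n ≠ m → (1 : ℝ) / 2 ≤ ‖u n - u m‖) :
    IsClosed ((⋃ n : ℕ, {x : U | ∃ t : ℝ, 0 < t ∧ t ≤ 1 - 1 / ((n : ℝ) + 1) ∧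
      x = t • u n}) ∪ {(0 : U)}) := by
  set S : Set U := (⋃ n : ℕ, {x : U | ∃ t : ℝ, 0 < t ∧ t ≤ 1 - 1 / ((n : ℝ) + 1) ∧
      x = t • u n}) ∪ {(0 : U)} with hS
  rw [← isOpen_compl_iff, Metric.isOpen_iff]
  intro x hx
  have hx0 : x ≠ 0 := by
    intro h
    exact hx (Or.inr (by simp [h]))
  have hx1 : ∀ n : ℕ, ∀ t : ℝ, 0 < t → t ≤ 1 - 1 / ((n : ℝ) + 1) → x ≠ t • u n := by
    intro n t ht htn hxt
    exact hx (Or.inl (Set.mem_iUnion.mpr ⟨n, t, ht, htn, hxt⟩))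
  have hr : 0 < ‖x‖ := norm_pos_iff.mpr hx0
  set r := ‖x‖ with hrdef
  -- any point of S close to x lies on a ray with parameter > r/2
  have key : ∀ y ∈ S, dist y x < r / 2 →
      ∃ n : ℕ, ∃ t : ℝ, r / 2 < t ∧ t ≤ 1 - 1 / ((n : ℝ) + 1) ∧ y = t • u n := by
    intro y hy hyx
    have hny : r / 2 < ‖y‖ := by
      have := norm_sub_norm_le x y
      rw [← dist_eq_norm, dist_comm] at this
      linarith
    rcases hy with hy | hy
    · obtain ⟨n, t, ht, htn, hyt⟩ := Set.mem_iUnion.mp hy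
      refine ⟨n, t, ?_, htn, hyt⟩
      have : ‖y‖ = t := by
        rw [hyt, norm_smul, hnorm, Real.norm_of_nonneg ht.le, mul_one]
      linarith
    · simp only [Set.mem_singleton_iff] at hy
      rw [hy, norm_zero] at hny
      linarith
  by_cases hmeet : ∀ p ∈ Metric.ball x (r / 25), p ∉ S
  · exact ⟨r / 25, by positivity, fun p hp => hmeet p hp⟩
  · push_neg at hmeet
    obtain ⟨p, hpball, hpS⟩ := hmeet
    have hpd : dist p x < r / 2 := by
      rw [Metric.mem_ball] at hpball; linarith
    obtain ⟨N, t, htr, htN, hpt⟩ := key p hpS hpd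
    set A : Set U := (fun s : ℝ => s • u N) '' Set.Icc 0 (1 - 1 / ((N : ℝ) + 1)) with hA
    have hAclosed : IsClosed A :=
      (isCompact_Icc.image (continuous_id.smul continuous_const)).isClosed
    have hxA : x ∉ A := by
      rintro ⟨s, ⟨hs0, hs1⟩, hse⟩
      rcases eq_or_lt_of_le hs0 with h | h
      · exact hx0 (by rw [← hse]; simp [← h])
      · exact hx1 N s h hs1 hse.symm
    obtain ⟨δ', hδ', hball'⟩ := Metric.isOpen_iff.mp hAclosed.isOpen_compl x hxA
    refine ⟨min (r / 25) δ', lt_min (by positivity) hδ', ?_⟩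
    intro q hq hqS
    rw [Metric.mem_ball] at hq
    have hq25 : dist q x < r / 25 := lt_of_lt_of_le hq (min_le_left _ _)
    have hqδ' : dist q x < δ' := lt_of_lt_of_le hq (min_le_right _ _)
    obtain ⟨m, s, hsr, hsm, hqs⟩ := key q hqS (by linarith)
    by_cases hmN : m = N
    · subst hmN
      have : q ∈ A := ⟨s, ⟨by linarith, hsm⟩, hqs.symm⟩
      exact hball' (Metric.mem_ball.mpr hqδ') this
    · have hdpq : dist p q < 2 * (r / 25) := by
        have := dist_triangle p x q
        rw [dist_comm x q] at this
        rw [Metric.mem_ball] at hpball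
        linarith
      have hsep6 : min t s / 6 ≤ ‖p - q‖ := by
        rcases le_total t s with hts | hst
        · rw [min_eq_left hts, hpt, hqs]
          exact ray_sep u hnorm hsep (fun h => hmN h.symm) (by linarith) hts
        · rw [min_eq_right hst, hqs, hpt, norm_sub_rev]
          exact ray_sep u hnorm hsep hmN (by linarith) hst
      rw [← dist_eq_norm] at hsep6
      have hmin : r / 2 < min t s := lt_min htr hsr
      linarith
end

section
/- The set 𝒞₂ := (⋃_{n∈ℕ} {t • u_n : t ∈ ℝ, 0 < t ≤ t_n}) ∪ {0} is bounded, connected, and disjoint from the unit sphere 𝒞₁ := {u ∈ U : ‖u‖ = 1}. -/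
/-! The set is star-shaped about `0`, hence path connected, and every point of it has norm
at most `tₙ < 1`, so it lies in the open unit ball, which is bounded and misses the sphere. -/

open Metric

def truncatedRays {ι E : Type*} [AddCommGroup E] [Module ℝ E] (u : ι → E) (c : ι → ℝ) : Set E :=
  (⋃ i, {x : E | ∃ t : ℝ, 0 < t ∧ t ≤ c i ∧ x = t • u i}) ∪ {0}

namespace truncatedRays

variable {ι E : Type*}

theorem zero_mem [AddCommGroup E] [Module ℝ E] (u : ι → E) (c : ι → ℝ) :
    (0 : E) ∈ truncatedRays u c :=
  Or.inr rfl

theorem starConvex_zero [AddCommGroup E] [Module ℝ E] (u : ι → E) (c : ι → ℝ) :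
    StarConvex ℝ 0 (truncatedRays u c) := by
  rw [starConvex_zero_iff]
  rintro x (hx | rfl) a ha₀ ha₁
  · obtain ⟨i, t, ht₀, htc, rfl⟩ := Set.mem_iUnion.1 hx
    obtain rfl | ha₀ := ha₀.eq_or_lt
    · simpa using zero_mem u c
    refine Or.inl (Set.mem_iUnion.2 ⟨i, a * t, mul_pos ha₀ ht₀, ?_, (mul_smul a t (u i)).symm⟩)
    nlinarith
  · simpa using zero_mem u c

theorem isConnected [AddCommGroup E] [Module ℝ E] [TopologicalSpace E] [IsTopologicalAddGroup E]
    [ContinuousSMul ℝ E] (u : ι → E) (c : ι → ℝ) : IsConnected (truncatedRays u c) :=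
  ((starConvex_zero u c).isPathConnected (zero_mem u c)).isConnected

theorem subset_ball [SeminormedAddCommGroup E] [NormedSpace ℝ E] {u : ι → E} {c : ι → ℝ}
    (hu : ∀ i, ‖u i‖ ≤ 1) (hc : ∀ i, c i < 1) : truncatedRays u c ⊆ ball 0 1 := by
  rintro x (hx | rfl)
  · obtain ⟨i, t, ht₀, htc, rfl⟩ := Set.mem_iUnion.1 hx
    rw [mem_ball_zero_iff, norm_smul, Real.norm_of_nonneg ht₀.le]
    calc t * ‖u i‖ ≤ t * 1 := by gcongr; exact hu i
      _ < 1 := by linarith [hc i]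
  · exact mem_ball_self one_pos

end truncatedRays

theorem C2_bounded_connected_disjoint_general {U : Type*} [NormedAddCommGroup U]
    [NormedSpace ℝ U]
    (u : ℕ → U) (hnorm : ∀ n, ‖u n‖ = 1) :
    Bornology.IsBounded ((⋃ n : ℕ, {x : U | ∃ t : ℝ, 0 < t ∧
        t ≤ 1 - 1 / ((n : ℝ) + 1) ∧ x = t • u n}) ∪ {(0 : U)}) ∧
    IsConnected ((⋃ n : ℕ, {x : U | ∃ t : ℝ, 0 < t ∧
        t ≤ 1 - 1 / ((n : ℝ) + 1) ∧ x = t • u n}) ∪ {(0 : U)}) ∧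
    Disjoint {v : U | ‖v‖ = 1}
      ((⋃ n : ℕ, {x : U | ∃ t : ℝ, 0 < t ∧
        t ≤ 1 - 1 / ((n : ℝ) + 1) ∧ x = t • u n}) ∪ {(0 : U)}) := by
  have hball : truncatedRays u (fun n : ℕ ↦ 1 - 1 / ((n : ℝ) + 1)) ⊆ ball 0 1 :=
    truncatedRays.subset_ball (fun n ↦ (hnorm n).le) fun n ↦ by
      have : (0 : ℝ) < 1 / ((n : ℝ) + 1) := by positivity
      linarith
  refine ⟨isBounded_ball.subset hball, truncatedRays.isConnected _ _, ?_⟩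
  have hsphere : {v : U | ‖v‖ = 1} = sphere 0 1 := by ext; simp
  exact hsphere ▸ sphere_disjoint_ball.mono_right hball

/-- The set `𝒞₂ = (⋃ n, {t • uₙ : 0 < t ≤ tₙ}) ∪ {0}`, built from a sequence of
unit vectors `uₙ` with mutual distances `≥ 1/2` and `tₙ = 1 - 1/(n+1)`, is bounded,
connected and disjoint from the unit sphere `𝒞₁ = {u : ‖u‖ = 1}`. -/
theorem C2_bounded_connected_disjoint {U : Type*} [NormedAddCommGroup U]
    [NormedSpace ℝ U] [CompleteSpace U] (hU : ¬ FiniteDimensional ℝ U)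
    (u : ℕ → U) (hnorm : ∀ n, ‖u n‖ = 1)
    (hsep : ∀ n m, n ≠ m → (1 : ℝ) / 2 ≤ ‖u n - u m‖) :
    Bornology.IsBounded ((⋃ n : ℕ, {x : U | ∃ t : ℝ, 0 < t ∧
        t ≤ 1 - 1 / ((n : ℝ) + 1) ∧ x = t • u n}) ∪ {(0 : U)}) ∧
    IsConnected ((⋃ n : ℕ, {x : U | ∃ t : ℝ, 0 < t ∧
        t ≤ 1 - 1 / ((n : ℝ) + 1) ∧ x = t • u n}) ∪ {(0 : U)}) ∧
    Disjoint {v : U | ‖v‖ = 1}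
      ((⋃ n : ℕ, {x : U | ∃ t : ℝ, 0 < t ∧
        t ≤ 1 - 1 / ((n : ℝ) + 1) ∧ x = t • u n}) ∪ {(0 : U)}) :=
  C2_bounded_connected_disjoint_general u hnorm
end

section
/- The distance between 𝒞₁ and 𝒞₂ is zero, i.e., inf{‖x − y‖ : x ∈ 𝒞₁, y ∈ 𝒞₂} = 0, even though 𝒞₁ ∩ 𝒞₂ = ∅ and both sets are closed. -/
/-! Points of `𝒞₂` away from `0` near a given `p ≠ 0` all lie on a single spine `(0, tₙ] • uₙ`,
because two spines through the same small ball would force `uₙ` and `uₘ` to be close. Hence a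
limit point of `𝒞₂` other than `0` is a limit point of one spine, whose closure only adds `0`;
so `𝒞₂` is closed. The distance to the sphere is zero because `‖uₙ - tₙ • uₙ‖ = 1 - tₙ → 0`. -/

open Filter Topology Set Metric

section Hedgehog

variable {E ι : Type*} [NormedAddCommGroup E] [NormedSpace ℝ E]

lemma mul_norm_sub_le_two_mul_norm_smul_sub_smul {a b : E} (ha : ‖a‖ = 1) (hb : ‖b‖ = 1)
    {t s : ℝ} (ht : 0 ≤ t) (hs : 0 ≤ s) : t * ‖a - b‖ ≤ 2 * ‖t • a - s • b‖ := by
  have hts : |t - s| ≤ ‖t • a - s • b‖ := by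
    simpa [norm_smul, ha, hb, abs_of_nonneg ht, abs_of_nonneg hs] using
      abs_norm_sub_norm_le (t • a) (s • b)
  calc t * ‖a - b‖ = ‖t • (a - b)‖ := by rw [norm_smul, Real.norm_of_nonneg ht]
    _ = ‖(t • a - s • b) + (s - t) • b‖ := by congr 1; module
    _ ≤ ‖t • a - s • b‖ + |t - s| := by
        grw [norm_add_le]; rw [norm_smul, hb, mul_one, Real.norm_eq_abs, abs_sub_comm]
    _ ≤ 2 * ‖t • a - s • b‖ := by linarith

variable {u : ι → E} {δ : ℝ}

lemma eq_of_smul_mem_ball (hu : ∀ i, ‖u i‖ = 1) (hδ : 0 ≤ δ)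
    (hsep : ∀ i j, i ≠ j → δ ≤ ‖u i - u j‖) {p : E} {ρ : ℝ} (hρ : (4 + δ) * ρ ≤ δ * ‖p‖)
    {i j : ι} {t s : ℝ} (ht : 0 ≤ t) (hs : 0 ≤ s)
    (hti : t • u i ∈ ball p ρ) (hsj : s • u j ∈ ball p ρ) : i = j := by
  by_contra hij
  rw [mem_ball_iff_norm] at hti hsj
  have hclose : ‖t • u i - s • u j‖ < 2 * ρ := by
    have := norm_sub_le_norm_sub_add_norm_sub (t • u i) p (s • u j)
    rw [norm_sub_rev p] at this
    linarith
  have hfar : ‖p‖ - ρ < t := by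
    have := norm_le_norm_add_norm_sub' p (t • u i)
    rw [norm_smul, hu, mul_one, Real.norm_of_nonneg ht, norm_sub_rev] at this
    linarith
  have hsplit := mul_norm_sub_le_two_mul_norm_smul_sub_smul (hu i) (hu j) ht hs
  nlinarith [hsep i j hij]

/-- The set `𝒞₂`, with spine lengths `r i` in place of `tₙ`. -/
def hedgehog (u : ι → E) (r : ι → ℝ) : Set E :=
  (⋃ i, {z : E | ∃ t : ℝ, 0 < t ∧ t ≤ r i ∧ z = t • u i}) ∪ {0}

variable {r : ι → ℝ}

lemma mem_hedgehog {z : E} :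
    z ∈ hedgehog u r ↔ z = 0 ∨ ∃ i, ∃ t : ℝ, 0 < t ∧ t ≤ r i ∧ z = t • u i := by
  simp [hedgehog]

lemma isClosed_hedgehog (hu : ∀ i, ‖u i‖ = 1) (hδ : 0 < δ)
    (hsep : ∀ i j, i ≠ j → δ ≤ ‖u i - u j‖) : IsClosed (hedgehog u r) := by
  refine isClosed_of_closure_subset fun p hp => ?_
  rcases eq_or_ne p 0 with rfl | hp0
  · exact mem_hedgehog.2 (Or.inl rfl)
  have hpn : 0 < ‖p‖ := norm_pos_iff.2 hp0
  set ρ := δ * ‖p‖ / (4 + δ)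
  have hρ : (4 + δ) * ρ ≤ δ * ‖p‖ := by rw [mul_div_cancel₀ _ (by positivity)]
  have hρpos : 0 < ρ := by positivity
  have hspine : ∀ ε > 0, ∃ i, ∃ t : ℝ, 0 < t ∧ t ≤ r i ∧
      dist p (t • u i) < ε ∧ t • u i ∈ ball p ρ := by
    intro ε hε
    obtain ⟨z, hz, hpz⟩ := Metric.mem_closure_iff.1 hp (min ε ρ) (lt_min hε hρpos)
    rcases mem_hedgehog.1 hz with rfl | ⟨i, t, ht, htr, rfl⟩
    · have : ρ < ‖p‖ := by
        rw [div_lt_iff₀ (by positivity)]; nlinarith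
      rw [dist_zero_right] at hpz
      exact absurd (hpz.trans_le (min_le_right _ _)) this.not_gt
    · refine ⟨i, t, ht, htr, hpz.trans_le (min_le_left _ _), ?_⟩
      rw [mem_ball']; exact hpz.trans_le (min_le_right _ _)
  obtain ⟨i, t, ht, -, -, hti⟩ := hspine ρ hρpos
  have hcl : p ∈ closure ((· • u i) '' Icc 0 (r i)) := Metric.mem_closure_iff.2 fun ε hε => by
    obtain ⟨j, s, hs, hsr, hdist, hsj⟩ := hspine ε hε
    obtain rfl := eq_of_smul_mem_ball hu hδ.le hsep hρ ht.le hs.le hti hsj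
    exact ⟨_, ⟨s, ⟨hs.le, hsr⟩, rfl⟩, hdist⟩
  have hclosed : IsClosed ((· • u i) '' Icc 0 (r i)) :=
    (isCompact_Icc.image (by fun_prop)).isClosed
  obtain ⟨τ, ⟨hτ0, hτr⟩, rfl⟩ := hclosed.closure_subset hcl
  have hτ : τ ≠ 0 := by rintro rfl; simp at hp0
  exact mem_hedgehog.2 (Or.inr ⟨i, τ, lt_of_le_of_ne hτ0 (Ne.symm hτ), hτr, rfl⟩)

lemma unitSphere_inter_hedgehog_eq_empty (hu : ∀ i, ‖u i‖ = 1) (hr : ∀ i, r i < 1) :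
    {v : E | ‖v‖ = 1} ∩ hedgehog u r = ∅ := by
  refine eq_empty_iff_forall_notMem.2 fun v ⟨hv, hvH⟩ => ?_
  rcases mem_hedgehog.1 hvH with rfl | ⟨i, t, ht, htr, rfl⟩
  · simp at hv
  · change ‖_‖ = 1 at hv
    rw [norm_smul, hu, mul_one, Real.norm_of_nonneg ht.le] at hv
    linarith [hr i]

lemma sInf_norm_sub_unitSphere_hedgehog_eq_zero (hu : ∀ i, ‖u i‖ = 1) {l : Filter ι} [l.NeBot]
    (hr : Tendsto r l (𝓝 1)) :
    sInf {d : ℝ | ∃ x ∈ {v : E | ‖v‖ = 1}, ∃ y ∈ hedgehog u r, d = ‖x - y‖} = 0 := by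
  set D := {d : ℝ | ∃ x ∈ {v : E | ‖v‖ = 1}, ∃ y ∈ hedgehog u r, d = ‖x - y‖}
  have hD : ∀ d ∈ D, 0 ≤ d := by
    rintro d ⟨x, -, y, -, rfl⟩; exact norm_nonneg _
  have hmem : ∀ᶠ i in l, |1 - r i| ∈ D := by
    filter_upwards [hr.eventually (lt_mem_nhds one_pos)] with i hri
    refine ⟨u i, hu i, r i • u i, mem_hedgehog.2 (Or.inr ⟨i, r i, hri, le_rfl, rfl⟩), ?_⟩
    rw [show u i - r i • u i = (1 - r i) • u i by module, norm_smul, hu, mul_one,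
      Real.norm_eq_abs]
  have hlim : Tendsto (fun i => |1 - r i|) l (𝓝 0) := by
    simpa using (tendsto_const_nhds (x := (1 : ℝ))).sub hr |>.abs
  exact le_antisymm (ge_of_tendsto hlim (hmem.mono fun i hi => csInf_le ⟨0, hD⟩ hi))
    (Real.sInf_nonneg hD)

end Hedgehog

theorem dist_C1_C2_eq_zero_general {U : Type*} [NormedAddCommGroup U]
    [NormedSpace ℝ U]
    (u : ℕ → U) (hnorm : ∀ n, ‖u n‖ = 1)
    (hsep : ∀ n m, n ≠ m → (1 : ℝ) / 2 ≤ ‖u n - u m‖) :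
    sInf {d : ℝ | ∃ x ∈ {v : U | ‖v‖ = 1},
        ∃ y ∈ (⋃ n : ℕ, {z : U | ∃ t : ℝ, 0 < t ∧ t ≤ 1 - 1 / ((n : ℝ) + 1) ∧
          z = t • u n}) ∪ {(0 : U)}, d = ‖x - y‖} = 0 ∧
    {v : U | ‖v‖ = 1} ∩
      ((⋃ n : ℕ, {z : U | ∃ t : ℝ, 0 < t ∧ t ≤ 1 - 1 / ((n : ℝ) + 1) ∧
        z = t • u n}) ∪ {(0 : U)}) = ∅ ∧
    IsClosed {v : U | ‖v‖ = 1} ∧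
    IsClosed ((⋃ n : ℕ, {z : U | ∃ t : ℝ, 0 < t ∧ t ≤ 1 - 1 / ((n : ℝ) + 1) ∧
      z = t • u n}) ∪ {(0 : U)}) := by
  have hlim : Tendsto (fun n : ℕ => 1 - 1 / ((n : ℝ) + 1)) atTop (𝓝 1) := by
    simpa using (tendsto_const_nhds (x := (1 : ℝ))).sub tendsto_one_div_add_atTop_nhds_zero_nat
  exact ⟨sInf_norm_sub_unitSphere_hedgehog_eq_zero hnorm hlim,
    unitSphere_inter_hedgehog_eq_empty hnorm fun n => sub_lt_self _ Nat.one_div_pos_of_nat,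
    isClosed_eq continuous_norm continuous_const,
    isClosed_hedgehog hnorm one_half_pos hsep⟩

/-- The distance between the unit sphere `𝒞₁` and the set
`𝒞₂ = (⋃ n, {t • uₙ : 0 < t ≤ tₙ}) ∪ {0}` is zero, even though the two sets are
disjoint and both are closed. -/
theorem dist_C1_C2_eq_zero {U : Type*} [NormedAddCommGroup U]
    [NormedSpace ℝ U] [CompleteSpace U] (hU : ¬ FiniteDimensional ℝ U)
    (u : ℕ → U) (hnorm : ∀ n, ‖u n‖ = 1)
    (hsep : ∀ n m, n ≠ m → (1 : ℝ) / 2 ≤ ‖u n - u m‖) :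
    sInf {d : ℝ | ∃ x ∈ {v : U | ‖v‖ = 1},
        ∃ y ∈ (⋃ n : ℕ, {z : U | ∃ t : ℝ, 0 < t ∧ t ≤ 1 - 1 / ((n : ℝ) + 1) ∧
          z = t • u n}) ∪ {(0 : U)}, d = ‖x - y‖} = 0 ∧
    {v : U | ‖v‖ = 1} ∩
      ((⋃ n : ℕ, {z : U | ∃ t : ℝ, 0 < t ∧ t ≤ 1 - 1 / ((n : ℝ) + 1) ∧
        z = t • u n}) ∪ {(0 : U)}) = ∅ ∧
    IsClosed {v : U | ‖v‖ = 1} ∧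
    IsClosed ((⋃ n : ℕ, {z : U | ∃ t : ℝ, 0 < t ∧ t ≤ 1 - 1 / ((n : ℝ) + 1) ∧
      z = t • u n}) ∪ {(0 : U)}) :=
  dist_C1_C2_eq_zero_general u hnorm hsep
end

section
/- The set 𝔅 := 𝒞₁ ∪ 𝒞₂ is closed and bounded in U, and its connected components are exactly 𝒞₁ and 𝒞₂; that is, 𝒞₁ and 𝒞₂ are disjoint, each is connected, closed, and is a maximal connected subset of 𝔅. -/
open Set

/-- A preconnected subset of the union of two disjoint closed sets which
contains the first one must equal it. -/
lemma aux_max {X : Type*} [TopologicalSpace X] {A B' T : Set X}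
    (hA : IsClosed A) (hB : IsClosed B') (hdis : Disjoint A B')
    (hTsub : T ⊆ A ∪ B') (hT : IsPreconnected T) (hAT : A ⊆ T) (hAne : A.Nonempty) :
    T = A := by
  refine subset_antisymm ?_ hAT
  by_contra h
  obtain ⟨x, hxT, hxA⟩ : ∃ x ∈ T, x ∉ A := by
    simpa [Set.subset_def] using h
  have hxB : x ∈ B' := (hTsub hxT).resolve_left hxA
  obtain ⟨a, ha⟩ := hAne
  have := hT B'ᶜ Aᶜ hB.isOpen_compl hA.isOpen_compl
    (fun t ht => by
      rcases hTsub ht with h1 | h2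
      · exact Or.inl (fun hb => hdis.ne_of_mem h1 hb rfl)
      · exact Or.inr (fun hb => hdis.ne_of_mem hb h2 rfl))
    ⟨a, hAT ha, fun hb => hdis.ne_of_mem ha hb rfl⟩
    ⟨x, hxT, hxA⟩
  obtain ⟨y, hyT, hyB, hyA⟩ := this
  rcases hTsub hyT with h1 | h2
  · exact hyA h1
  · exact hyB h2

lemma aux_closed_C2 {U : Type*} [NormedAddCommGroup U] [NormedSpace ℝ U]
    (u : ℕ → U) (hnorm : ∀ n, ‖u n‖ = 1)
    (hsep : ∀ n m, n ≠ m → (1 : ℝ) / 2 ≤ ‖u n - u m‖) :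
    IsClosed ((⋃ n : ℕ, {z : U | ∃ t : ℝ, 0 < t ∧ t ≤ 1 - 1 / ((n : ℝ) + 1) ∧
      z = t • u n}) ∪ {(0 : U)}) := by
  set S : Set U := (⋃ n : ℕ, {z : U | ∃ t : ℝ, 0 < t ∧ t ≤ 1 - 1 / ((n : ℝ) + 1) ∧
      z = t • u n}) ∪ {(0 : U)} with hS
  apply IsSeqClosed.isClosed
  intro x p hx hxp
  by_cases hp0 : p = 0
  · exact Or.inr (by simp [hp0])
  have hc : 0 < ‖p‖ := norm_pos_iff.mpr hp0
  set c := ‖p‖ with hcdef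
  -- eventually x k is within c/16 of p
  obtain ⟨K, hK⟩ : ∃ K : ℕ, ∀ k ≥ K, ‖x k - p‖ < c / 16 := by
    have := (Metric.tendsto_atTop.mp hxp) (c / 16) (by positivity)
    obtain ⟨K, hK⟩ := this
    exact ⟨K, fun k hk => by simpa [dist_eq_norm] using hK k hk⟩
  set y : ℕ → U := fun k => x (k + K) with hy
  have hyp : ∀ k, ‖y k - p‖ < c / 16 := fun k => hK (k + K) (Nat.le_add_left _ _)
  have hynorm : ∀ k, c / 2 < ‖y k‖ := by
    intro k
    have h1 : ‖p‖ - ‖y k‖ ≤ ‖y k - p‖ := by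
      have := norm_sub_norm_le (y k) p
      linarith [abs_le.mp (abs_norm_sub_norm_le (y k) p)]
    have := hyp k
    rw [← hcdef] at *
    linarith
  have hymem : ∀ k, ∃ n : ℕ, ∃ t : ℝ, 0 < t ∧ t ≤ 1 - 1 / ((n : ℝ) + 1) ∧ y k = t • u n := by
    intro k
    rcases hx (k + K) with hmem | hmem
    · simpa using hmem
    · exfalso
      have hy0 : y k = 0 := by simpa using hmem
      have hn := hynorm k
      rw [hy0, norm_zero] at hn
      linarith
  choose N t ht0 htle hyeq using hymem
  have hty : ∀ k, ‖y k‖ = t k := by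
    intro k
    rw [hyeq k, norm_smul, hnorm (N k), Real.norm_eq_abs, abs_of_pos (ht0 k), mul_one]
  -- all on the same ray
  have hNconst : ∀ k, N k = N 0 := by
    intro k
    by_contra hne
    have hdist : ‖y k - y 0‖ < c / 8 := by
      have h1 := hyp k
      have h2 := hyp 0
      calc ‖y k - y 0‖ = ‖(y k - p) - (y 0 - p)‖ := by rw [sub_sub_sub_cancel_right]
        _ ≤ ‖y k - p‖ + ‖y 0 - p‖ := norm_sub_le _ _
        _ < c / 8 := by linarith
    have hst : |t k - t 0| ≤ ‖y k - y 0‖ := by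
      have := abs_norm_sub_norm_le (y k) (y 0)
      rwa [hty k, hty 0] at this
    have hkey : t k * ‖u (N k) - u (N 0)‖ ≤ ‖y k - y 0‖ + |t k - t 0| := by
      have hdecomp : t k • (u (N k) - u (N 0)) = (y k - y 0) - (t k - t 0) • u (N 0) := by
        rw [hyeq k, hyeq 0]
        module
      calc t k * ‖u (N k) - u (N 0)‖ = ‖t k • (u (N k) - u (N 0))‖ := by
            rw [norm_smul, Real.norm_eq_abs, abs_of_pos (ht0 k)]
        _ = ‖(y k - y 0) - (t k - t 0) • u (N 0)‖ := by rw [hdecomp]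
        _ ≤ ‖y k - y 0‖ + ‖(t k - t 0) • u (N 0)‖ := norm_sub_le _ _
        _ = ‖y k - y 0‖ + |t k - t 0| := by
            rw [norm_smul, hnorm (N 0), Real.norm_eq_abs, mul_one]
    have hhalf : t k / 2 ≤ t k * ‖u (N k) - u (N 0)‖ := by
      have := hsep (N k) (N 0) hne
      have htk := ht0 k
      nlinarith
    have htc : c / 2 < t k := by rw [← hty k]; exact hynorm k
    linarith
  -- p lies on the closed segment of ray N 0
  set n0 := N 0 with hn0
  have hyK : ∀ k, y k ∈ (fun s : ℝ => s • u n0) '' Set.Icc 0 (1 - 1 / ((n0 : ℝ) + 1)) := by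
    intro k
    refine ⟨t k, ⟨(ht0 k).le, ?_⟩, ?_⟩
    · have := htle k; rwa [hNconst k] at this
    · rw [← hNconst k]; exact (hyeq k).symm
  have hKcompact : IsCompact ((fun s : ℝ => s • u n0) '' Set.Icc 0 (1 - 1 / ((n0 : ℝ) + 1))) :=
    isCompact_Icc.image (continuous_id.smul continuous_const)
  have hytend : Filter.Tendsto y Filter.atTop (nhds p) :=
    hxp.comp (Filter.tendsto_add_atTop_nat K)
  have hpK : p ∈ (fun s : ℝ => s • u n0) '' Set.Icc 0 (1 - 1 / ((n0 : ℝ) + 1)) :=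
    hKcompact.isClosed.mem_of_tendsto hytend (Filter.Eventually.of_forall hyK)
  obtain ⟨s, ⟨hs0, hs1⟩, hps⟩ := hpK
  have hsnorm : ‖p‖ = s := by
    rw [← hps, norm_smul, hnorm n0, Real.norm_eq_abs, abs_of_nonneg hs0, mul_one]
  have hspos : 0 < s := by rw [← hsnorm]; exact hc
  exact Or.inl (Set.mem_iUnion.mpr ⟨n0, s, hspos, hs1, hps.symm⟩)

/-- The set `𝔅 = 𝒞₁ ∪ 𝒞₂` is closed and bounded, and its connected components are
exactly `𝒞₁` (the unit sphere) and `𝒞₂ = (⋃ n, {t • uₙ : 0 < t ≤ tₙ}) ∪ {0}`: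
they are disjoint, each is connected, closed, and maximal among connected subsets
of `𝔅`. -/
theorem B_components {U : Type*} [NormedAddCommGroup U]
    [NormedSpace ℝ U] [CompleteSpace U] (hU : ¬ FiniteDimensional ℝ U)
    (u : ℕ → U) (hnorm : ∀ n, ‖u n‖ = 1)
    (hsep : ∀ n m, n ≠ m → (1 : ℝ) / 2 ≤ ‖u n - u m‖)
    (C₁ C₂ B : Set U)
    (hC₁ : C₁ = {v : U | ‖v‖ = 1})
    (hC₂ : C₂ = (⋃ n : ℕ, {z : U | ∃ t : ℝ, 0 < t ∧ t ≤ 1 - 1 / ((n : ℝ) + 1) ∧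
      z = t • u n}) ∪ {(0 : U)})
    (hB : B = C₁ ∪ C₂) :
    IsClosed B ∧ Bornology.IsBounded B ∧
    Disjoint C₁ C₂ ∧
    IsConnected C₁ ∧ IsClosed C₁ ∧
    IsConnected C₂ ∧ IsClosed C₂ ∧
    (∀ T : Set U, T ⊆ B → IsPreconnected T → C₁ ⊆ T → T = C₁) ∧
    (∀ T : Set U, T ⊆ B → IsPreconnected T → C₂ ⊆ T → T = C₂) := by
  -- C₁ is the unit sphere
  have hC₁s : C₁ = Metric.sphere (0 : U) 1 := by
    rw [hC₁]; ext v; simp [dist_zero_right]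
  -- rank > 1
  have hrank : 1 < Module.rank ℝ U := by
    have h1 : ¬ Module.rank ℝ U < Cardinal.aleph0 := fun h => hU (Module.rank_lt_aleph0_iff.mp h)
    exact lt_of_lt_of_le Cardinal.one_lt_aleph0 (not_lt.mp h1)
  -- C₁ closed
  have hC₁closed : IsClosed C₁ := by
    rw [hC₁s]; exact Metric.isClosed_sphere
  -- C₁ connected
  have hC₁conn : IsConnected C₁ := by
    rw [hC₁s]; exact isConnected_sphere hrank 0 zero_le_one
  -- C₂ closed
  have hC₂closed : IsClosed C₂ := by
    rw [hC₂]; exact aux_closed_C2 u hnorm hsep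
  -- membership facts in C₂
  have h0mem : (0 : U) ∈ C₂ := by rw [hC₂]; exact Or.inr rfl
  have hC₂norm : ∀ v ∈ C₂, ‖v‖ < 1 := by
    intro v hv
    rw [hC₂] at hv
    rcases hv with hv | hv
    · obtain ⟨n, hn⟩ := Set.mem_iUnion.mp hv
      obtain ⟨s, hs0, hs1, rfl⟩ := hn
      rw [norm_smul, hnorm n, Real.norm_eq_abs, abs_of_pos hs0, mul_one]
      have hpos : (0 : ℝ) < 1 / ((n : ℝ) + 1) := by positivity
      linarith
    · simp only [Set.mem_singleton_iff] at hv
      rw [hv]; simp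
  -- Disjoint
  have hdisj : Disjoint C₁ C₂ := by
    rw [Set.disjoint_left]
    intro v hv1 hv2
    have h1 : ‖v‖ = 1 := by rw [hC₁] at hv1; exact hv1
    have h2 := hC₂norm v hv2
    linarith
  -- C₂ as union of segments
  have hC₂eq : C₂ = ⋃ n : ℕ, (fun s : ℝ => s • u n) '' Set.Icc 0 (1 - 1 / ((n : ℝ) + 1)) := by
    rw [hC₂]
    ext z
    simp only [Set.mem_union, Set.mem_iUnion, Set.mem_setOf_eq, Set.mem_singleton_iff,
      Set.mem_image, Set.mem_Icc]
    constructor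
    · rintro (⟨n, s, hs0, hs1, rfl⟩ | rfl)
      · exact ⟨n, s, ⟨hs0.le, hs1⟩, rfl⟩
      · exact ⟨0, 0, ⟨le_refl 0, by norm_num⟩, by simp⟩
    · rintro ⟨n, s, ⟨hs0, hs1⟩, rfl⟩
      rcases eq_or_lt_of_le hs0 with h | h
      · exact Or.inr (by rw [← h]; simp)
      · exact Or.inl ⟨n, s, h, hs1, rfl⟩
  -- C₂ connected
  have hC₂conn : IsConnected C₂ := by
    refine ⟨⟨0, h0mem⟩, ?_⟩
    rw [hC₂eq]
    apply isPreconnected_iUnion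
    · refine ⟨0, Set.mem_iInter.mpr fun n => ⟨0, ⟨le_refl 0, ?_⟩, by simp⟩⟩
      have : 1 / ((n : ℝ) + 1) ≤ 1 := by
        rw [div_le_one (by positivity)]; linarith [Nat.cast_nonneg (α := ℝ) n]
      linarith
    · intro n
      have hcont : Continuous (fun s : ℝ => s • u n) := continuous_id.smul continuous_const
      exact isPreconnected_Icc.image _ hcont.continuousOn
  -- bounded
  have hBsub : B ⊆ Metric.closedBall (0 : U) 1 := by
    intro v hv
    rw [hB] at hv
    rw [Metric.mem_closedBall, dist_zero_right]
    rcases hv with hv | hv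
    · rw [hC₁] at hv; rw [hv]
    · exact (hC₂norm v hv).le
  have hu0 : u 0 ∈ C₁ := by rw [hC₁]; exact hnorm 0
  have hC₁ne : C₁.Nonempty := ⟨u 0, hu0⟩
  refine ⟨?_, ?_, hdisj, hC₁conn, hC₁closed, hC₂conn, hC₂closed, ?_, ?_⟩
  · rw [hB]; exact hC₁closed.union hC₂closed
  · exact (Metric.isBounded_closedBall).subset hBsub
  · intro T hTB hTpre hTC₁
    exact aux_max hC₁closed hC₂closed hdisj (hB ▸ hTB) hTpre hTC₁ hC₁ne
  · intro T hTB hTpre hTC₂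
    have := aux_max hC₂closed hC₁closed hdisj.symm
      (by rw [hB] at hTB; exact hTB.trans (Set.union_comm _ _).subset)
      hTpre hTC₂ ⟨0, h0mem⟩
    exact this
end

section
/- Let (s_m)_{m∈ℕ} be a sequence of real numbers with 0 < s_m ≤ 1 for all m, let n : ℕ → ℕ, and suppose that the sequence (s_m • u_{n(m)})_{m∈ℕ} is Cauchy in U and s_m → s₀ with s₀ > 0. Then the index sequence n(m) is eventually constant; consequently s_m • u_{n(m)} converges to s₀ • u_{n(m₀)} for some m₀. -/
/-- If `(sₘ • u_{n(m)})` is a Cauchy sequence, where the `uₙ` are unit vectors with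
mutual distances `≥ 1/2`, `0 < sₘ ≤ 1` and `sₘ → s₀ > 0`, then the index sequence
`n(m)` is eventually constant and `sₘ • u_{n(m)} → s₀ • u_{n(m₀)}` for some `m₀`. -/
theorem eventually_constant_index {U : Type*} [NormedAddCommGroup U]
    [NormedSpace ℝ U] [CompleteSpace U] (hU : ¬ FiniteDimensional ℝ U)
    (u : ℕ → U) (hnorm : ∀ n, ‖u n‖ = 1)
    (hsep : ∀ n m, n ≠ m → (1 : ℝ) / 2 ≤ ‖u n - u m‖)
    (s : ℕ → ℝ) (hs : ∀ m, 0 < s m ∧ s m ≤ 1) (n : ℕ → ℕ)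
    (hC : CauchySeq (fun m => s m • u (n m)))
    (s₀ : ℝ) (hlim : Filter.Tendsto s Filter.atTop (nhds s₀)) (hs₀ : 0 < s₀) :
    ∃ m₀ : ℕ, (∀ m ≥ m₀, n m = n m₀) ∧
      Filter.Tendsto (fun m => s m • u (n m)) Filter.atTop
        (nhds (s₀ • u (n m₀))) := by
  obtain ⟨N1, hN1⟩ := (Metric.tendsto_atTop.mp hlim) (s₀ / 8) (by linarith)
  obtain ⟨N2, hN2⟩ := (Metric.cauchySeq_iff.mp hC) (s₀ / 8) (by linarith)
  set m₀ := max N1 N2 with hm₀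
  have key : ∀ m ≥ m₀, n m = n m₀ := by
    intro m hm
    by_contra hne
    have h1 : |s m - s₀| < s₀ / 8 := by
      have := hN1 m (le_trans (le_max_left _ _) hm)
      rwa [Real.dist_eq] at this
    have h1' : |s m₀ - s₀| < s₀ / 8 := by
      have := hN1 m₀ (le_max_left _ _)
      rwa [Real.dist_eq] at this
    have h2 : dist (s m • u (n m)) (s m₀ • u (n m₀)) < s₀ / 8 :=
      hN2 m (le_trans (le_max_right _ _) hm) m₀ (le_max_right _ _)
    rw [dist_eq_norm] at h2
    have hsm : s₀ - s₀ / 8 ≤ s m := by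
      have := abs_lt.mp h1
      linarith [this.1]
    have hdiff : |s m - s m₀| ≤ s₀ / 4 := by
      have ha := abs_lt.mp h1
      have hb := abs_lt.mp h1'
      rw [abs_le]
      constructor <;> linarith
    have hlow : s m * (1 / 2) - |s m - s m₀| ≤
        ‖s m • u (n m) - s m₀ • u (n m₀)‖ := by
      have e1 : s m • u (n m) - s m₀ • u (n m₀) =
          s m • (u (n m) - u (n m₀)) + (s m - s m₀) • u (n m₀) := by
        module
      have e2 : ‖s m • (u (n m) - u (n m₀))‖ ≤
          ‖s m • u (n m) - s m₀ • u (n m₀)‖ + ‖(s m - s m₀) • u (n m₀)‖ := by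
        have e1' : s m • (u (n m) - u (n m₀)) =
            (s m • u (n m) - s m₀ • u (n m₀)) - (s m - s m₀) • u (n m₀) := by
          rw [e1]; abel
        rw [e1']; exact norm_sub_le _ _
      have e3 : ‖s m • (u (n m) - u (n m₀))‖ = s m * ‖u (n m) - u (n m₀)‖ := by
        rw [norm_smul, Real.norm_eq_abs, abs_of_pos (hs m).1]
      have e4 : ‖(s m - s m₀) • u (n m₀)‖ = |s m - s m₀| := by
        rw [norm_smul, Real.norm_eq_abs, hnorm, mul_one]
      have e5 : s m * (1 / 2) ≤ s m * ‖u (n m) - u (n m₀)‖ :=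
        mul_le_mul_of_nonneg_left (hsep _ _ hne) (hs m).1.le
      linarith [e2, e3 ▸ e5]
    have : s m * (1 / 2) - |s m - s m₀| ≤ s₀ / 8 := le_of_lt (lt_of_le_of_lt hlow h2)
    nlinarith [hs₀, hsm, hdiff]
  refine ⟨m₀, key, ?_⟩
  have htend : Filter.Tendsto (fun m => s m • u (n m₀)) Filter.atTop
      (nhds (s₀ • u (n m₀))) := hlim.smul_const _
  refine htend.congr' ?_
  filter_upwards [Filter.eventually_ge_atTop m₀] with m hm
  rw [key m hm]
end
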